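/- Let ρA ∈ Ω_m and ρB ∈ Ω_n, and let R be an extreme point of the convex set Γ^Q(ρA, ρB), i.e., R ∈ Γ^Q(ρA, ρB) and whenever R = a • R₁ + (1−a) • R₂ with R₁, R₂ ∈ Γ^Q(ρA, ρB) and 0 < a < 1, then R₁ = R₂ = R. Then the rank of R satisfies (rank R)² ≤ m² + n² − 1. -/

import Mathlib

open Matrix ComplexOrder

/-- A density matrix: positive semidefinite with trace one. -/
def IsDensityMatrix {k : Type*} [Fintype k] [DecidableEq k] (ρ : Matrix k k ℂ) : Prop :=
  ρ.PosSemidef ∧ ρ.trace = 1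

/-- Partial trace over the second factor. -/
noncomputable def trB {m n : ℕ} (R : Matrix (Fin m × Fin n) (Fin m × Fin n) ℂ) :
    Matrix (Fin m) (Fin m) ℂ :=
  Matrix.of fun i j => ∑ p, R (i, p) (j, p)

/-- Partial trace over the first factor. -/
noncomputable def trA {m n : ℕ} (R : Matrix (Fin m × Fin n) (Fin m × Fin n) ℂ) :
    Matrix (Fin n) (Fin n) ℂ :=
  Matrix.of fun p q => ∑ i, R (i, p) (i, q)

/-- The set of quantum couplings of two density matrices. -/
def QCouplings {m n : ℕ} (ρA : Matrix (Fin m) (Fin m) ℂ) (ρB : Matrix (Fin n) (Fin n) ℂ) :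
    Set (Matrix (Fin m × Fin n) (Fin m × Fin n) ℂ) :=
  {R | IsDensityMatrix R ∧ trB R = ρA ∧ trA R = ρB}

/-- The quantum optimal transport cost. -/
noncomputable def QOT {m n : ℕ} (C : Matrix (Fin m × Fin n) (Fin m × Fin n) ℂ)
    (ρA : Matrix (Fin m) (Fin m) ℂ) (ρB : Matrix (Fin n) (Fin n) ℂ) : ℝ :=
  sInf ((fun R => ((C * R).trace).re) '' QCouplings ρA ρB)

/- Write `R = B Bᴴ` with `B` of full column rank `r = rank R`. The matrices `B K Bᴴ`, `K` an
`r × r` matrix, form an `r²`-dimensional space, while the pairs of partial traces they can have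
(two matrices with equal traces) form a space of dimension `m² + n² - 1`. If `r² > m² + n² - 1`
some `K ≠ 0`, which may be taken Hermitian, gives `B K Bᴴ` with vanishing partial traces; then
`B (1 ± c K) Bᴴ` are two couplings for small `c > 0` whose midpoint is `R`, so `R` is not
extreme. -/

lemma Matrix.submatrix_mul_conjTranspose_submatrix_of_col_eq_zero {m n α : Type*}
    [Fintype n] [Semiring α] [StarRing α] {p : n → Prop} [DecidablePred p] (M : Matrix m n α)
    (hM : ∀ a i, ¬p i → M a i = 0) :
    M.submatrix id (Subtype.val : Subtype p → n) *
      (M.submatrix id (Subtype.val : Subtype p → n))ᴴ = M * Mᴴ := by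
  rw [conjTranspose_submatrix]
  ext a b
  simp only [Matrix.mul_apply, submatrix_apply, id]
  rw [← Finset.sum_subtype {i | p i} (by simp) fun j => M a j * Mᴴ j b]
  exact Finset.sum_filter_of_ne fun i _ hi => by_contra fun hpi => hi (by rw [hM a i hpi, zero_mul])

lemma Matrix.PosSemidef.exists_eq_mul_conjTranspose_of_mul_eq_one {𝕜 n : Type*} [RCLike 𝕜]
    [Fintype n] [DecidableEq n] {A : Matrix n n 𝕜} (hA : A.PosSemidef) :
    ∃ (B : Matrix n (Fin A.rank) 𝕜) (C : Matrix (Fin A.rank) n 𝕜), C * B = 1 ∧ A = B * Bᴴ := by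
  set ev := hA.1.eigenvalues
  set U : Matrix n n 𝕜 := (hA.1.eigenvectorUnitary : Matrix n n 𝕜)
  let s : n → 𝕜 := fun i => (√(ev i) : 𝕜)
  have hs : ∀ i, ev i ≠ 0 → s i ≠ 0 := fun i hi =>
    RCLike.ofReal_ne_zero.mpr ((Real.sqrt_ne_zero (hA.eigenvalues_nonneg i)).mpr hi)
  set M := U * diagonal s
  have hM : A = M * Mᴴ := by
    rw [conjTranspose_mul, mul_assoc, ← mul_assoc (diagonal s), diagonal_conjTranspose,
      diagonal_mul_diagonal, ← mul_assoc, hA.1.spectral_theorem, Unitary.conjStarAlgAut_apply,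
      star_eq_conjTranspose]
    congr 3
    ext i
    simp only [Function.comp_apply, s, Pi.star_apply, RCLike.star_def, RCLike.conj_ofReal,
      ← RCLike.ofReal_mul, Real.mul_self_sqrt (hA.eigenvalues_nonneg i), ev]
  let B : Matrix n {i // ev i ≠ 0} 𝕜 := M.submatrix id Subtype.val
  let C : Matrix {i // ev i ≠ 0} n 𝕜 := (diagonal s⁻¹ * star U).submatrix Subtype.val id
  have hCB : C * B = 1 := by
    have hU : star U * U = 1 := Unitary.coe_star_mul_self _
    rw [← submatrix_mul _ _ _ _ _ Function.bijective_id, mul_assoc, ← mul_assoc (star U), hU,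
      one_mul, diagonal_mul_diagonal]
    ext i j
    by_cases hij : i = j
    · subst hij
      simp [hs i i.2]
    · simp [hij, diagonal_apply_ne _ (Subtype.val_injective.ne hij)]
  have hBB : A = B * Bᴴ := by
    rw [hM]
    refine (submatrix_mul_conjTranspose_submatrix_of_col_eq_zero M fun a i hi => ?_).symm
    simp [M, s, not_not.mp hi]
  let e : {i // ev i ≠ 0} ≃ Fin A.rank :=
    Fintype.equivFinOfCardEq hA.1.rank_eq_card_non_zero_eigs.symm
  refine ⟨B.submatrix id e.symm, C.submatrix e.symm id, ?_, ?_⟩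
  · rw [← submatrix_mul _ _ _ _ _ Function.bijective_id, hCB, submatrix_one_equiv]
  · rw [conjTranspose_submatrix, submatrix_mul_equiv, submatrix_id_id, hBB]

lemma Matrix.mul_mul_conjTranspose_injective_of_mul_eq_one {m n α : Type*} [Fintype m]
    [Fintype n] [DecidableEq n] [CommSemiring α] [StarRing α] {B : Matrix m n α} {C : Matrix n m α}
    (hCB : C * B = 1) : Function.Injective fun K : Matrix n n α => B * K * Bᴴ := by
  have hcancel : ∀ K : Matrix n n α, C * (B * K * Bᴴ) * Cᴴ = K := fun K => by
    calc C * (B * K * Bᴴ) * Cᴴ = C * B * K * (C * B)ᴴ := by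
          simp only [conjTranspose_mul, Matrix.mul_assoc]
      _ = K := by rw [hCB, conjTranspose_one, Matrix.one_mul, Matrix.mul_one]
  intro K L h
  rw [← hcancel K, ← hcancel L]
  exact congrArg (fun X => C * X * Cᴴ) h

open scoped Matrix.Norms.L2Operator MatrixOrder in
lemma Matrix.IsHermitian.posSemidef_one_add_of_norm_le_one {n : Type*} [Fintype n]
    [DecidableEq n] {K : Matrix n n ℂ} (hK : K.IsHermitian) (hK1 : ‖K‖ ≤ 1) :
    (1 + K).PosSemidef := by
  rw [← Matrix.nonneg_iff_posSemidef, ← neg_le_iff_add_nonneg']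
  calc -1 ≤ -(algebraMap ℝ (Matrix n n ℂ) ‖K‖) := by
        rw [neg_le_neg_iff, Algebra.algebraMap_eq_smul_one]
        exact smul_le_of_le_one_left zero_le_one hK1
    _ ≤ K := IsSelfAdjoint.neg_algebraMap_norm_le_self hK

open scoped Matrix.Norms.L2Operator in
lemma Matrix.IsHermitian.exists_posSemidef_one_add_smul {n : Type*} [Fintype n]
    [DecidableEq n] {K : Matrix n n ℂ} (hK : K.IsHermitian) :
    ∃ c : ℝ, 0 < c ∧ (1 + (c : ℂ) • K).PosSemidef ∧ (1 - (c : ℂ) • K).PosSemidef := by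
  set c := (‖K‖ + 1)⁻¹
  have hc : 0 < c := by positivity
  have hcK : ((c : ℂ) • K).IsHermitian := hK.smul (Complex.conj_ofReal c)
  have hnorm : ‖(c : ℂ) • K‖ ≤ 1 := by
    rw [norm_smul, Complex.norm_real, Real.norm_of_nonneg hc.le, inv_mul_le_iff₀ (by positivity)]
    linarith
  refine ⟨c, hc, hcK.posSemidef_one_add_of_norm_le_one hnorm, ?_⟩
  rw [sub_eq_add_neg]
  exact hcK.neg.posSemidef_one_add_of_norm_le_one (by rwa [norm_neg])

lemma LinearMap.exists_ne_zero_map_eq_zero_of_trace_fst_eq_trace_snd {K V ι κ : Type*} [Field K]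
    [AddCommGroup V] [Module K V] [FiniteDimensional K V] [Fintype ι] [Fintype κ] [DecidableEq ι]
    [Nonempty ι] (f : V →ₗ[K] Matrix ι ι K × Matrix κ κ K)
    (hf : ∀ v, (f v).1.trace = (f v).2.trace)
    (hV : Fintype.card ι ^ 2 + Fintype.card κ ^ 2 - 1 < Module.finrank K V) :
    ∃ v, v ≠ 0 ∧ f v = 0 := by
  set φ := (traceLinearMap ι K K).comp (LinearMap.fst K _ _) -
    (traceLinearMap κ K K).comp (LinearMap.snd K (Matrix ι ι K) (Matrix κ κ K))
  have hφ : LinearMap.range φ = ⊤ := by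
    obtain ⟨i⟩ := ‹Nonempty ι›
    refine LinearMap.range_eq_top.mpr fun c => ⟨(Matrix.single i i c, 0), ?_⟩
    simp [φ, trace_single_eq_same]
  have hrank := LinearMap.finrank_range_add_finrank_ker φ
  rw [hφ, finrank_top, Module.finrank_self, Module.finrank_prod, Module.finrank_matrix,
    Module.finrank_matrix, Module.finrank_self, mul_one, mul_one, ← sq, ← sq] at hrank
  have hfφ : ∀ v, f v ∈ LinearMap.ker φ := fun v => by simp [φ, hf]
  have hker : LinearMap.ker (f.codRestrict _ hfφ) ≠ ⊥ :=
    LinearMap.ker_ne_bot_of_finrank_lt (by omega)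
  obtain ⟨v, hv, hv0⟩ := Submodule.exists_mem_ne_zero_of_ne_bot hker
  exact ⟨v, hv0, by simpa [LinearMap.ker_codRestrict] using hv⟩

lemma LinearMap.exists_isSelfAdjoint_ne_zero_map_eq_zero {A B : Type*} [AddCommGroup A]
    [Module ℂ A] [StarAddMonoid A] [StarModule ℂ A] [AddCommGroup B] [Module ℂ B]
    [StarAddMonoid B] (f : A →ₗ[ℂ] B) (hf : ∀ a, f (star a) = star (f a)) {a : A} (ha : a ≠ 0)
    (hfa : f a = 0) : ∃ b, IsSelfAdjoint b ∧ b ≠ 0 ∧ f b = 0 := by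
  have hker : ∀ c, f c = 0 → f (c + star c) = 0 := fun c hc => by simp [hf, hc]
  by_cases h : a + star a = 0
  · refine ⟨Complex.I • a + star (Complex.I • a), IsSelfAdjoint.add_star_self _, ?_,
      hker _ (by simp [hfa])⟩
    -- `star a = -a`, so the element is `2 I a`
    rw [star_smul, Complex.star_def, Complex.conj_I, eq_neg_of_add_eq_zero_right h, neg_smul_neg,
      ← two_smul ℂ, smul_smul]
    exact smul_ne_zero (by simp) ha
  · exact ⟨a + star a, IsSelfAdjoint.add_star_self _, h, hker a hfa⟩

section PartialTrace

variable {m n : ℕ}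

lemma trB_add (X Y : Matrix (Fin m × Fin n) (Fin m × Fin n) ℂ) :
    trB (X + Y) = trB X + trB Y := by
  ext i j
  simp [trB, Finset.sum_add_distrib]

lemma trA_add (X Y : Matrix (Fin m × Fin n) (Fin m × Fin n) ℂ) :
    trA (X + Y) = trA X + trA Y := by
  ext i j
  simp [trA, Finset.sum_add_distrib]

lemma trB_smul (c : ℂ) (X : Matrix (Fin m × Fin n) (Fin m × Fin n) ℂ) :
    trB (c • X) = c • trB X := by
  ext i j
  simp [trB, Finset.mul_sum]

lemma trA_smul (c : ℂ) (X : Matrix (Fin m × Fin n) (Fin m × Fin n) ℂ) :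
    trA (c • X) = c • trA X := by
  ext i j
  simp [trA, Finset.mul_sum]

lemma trB_conjTranspose (X : Matrix (Fin m × Fin n) (Fin m × Fin n) ℂ) :
    trB Xᴴ = (trB X)ᴴ := by
  ext i j
  simp [trB, conjTranspose_apply]

lemma trA_conjTranspose (X : Matrix (Fin m × Fin n) (Fin m × Fin n) ℂ) :
    trA Xᴴ = (trA X)ᴴ := by
  ext i j
  simp [trA, conjTranspose_apply]

lemma trace_trB (X : Matrix (Fin m × Fin n) (Fin m × Fin n) ℂ) : (trB X).trace = X.trace := by
  simp [trB, trace, Fintype.sum_prod_type]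

lemma trace_trA (X : Matrix (Fin m × Fin n) (Fin m × Fin n) ℂ) : (trA X).trace = X.trace := by
  simp only [trA, trace, diag, of_apply, Fintype.sum_prod_type]
  exact Finset.sum_comm

variable {ι : Type*} [Fintype ι]

noncomputable def partialTracesConj (B : Matrix (Fin m × Fin n) ι ℂ) :
    Matrix ι ι ℂ →ₗ[ℂ] Matrix (Fin m) (Fin m) ℂ × Matrix (Fin n) (Fin n) ℂ where
  toFun K := (trB (B * K * Bᴴ), trA (B * K * Bᴴ))
  map_add' K L := by simp [Matrix.mul_add, Matrix.add_mul, trB_add, trA_add]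
  map_smul' c K := by simp [trB_smul, trA_smul]

lemma partialTracesConj_star (B : Matrix (Fin m × Fin n) ι ℂ) (K : Matrix ι ι ℂ) :
    partialTracesConj B (star K) = star (partialTracesConj B K) := by
  have h : B * Kᴴ * Bᴴ = (B * K * Bᴴ)ᴴ := by
    simp only [conjTranspose_mul, conjTranspose_conjTranspose, Matrix.mul_assoc]
  change (trB (B * Kᴴ * Bᴴ), trA (B * Kᴴ * Bᴴ)) = ((trB (B * K * Bᴴ))ᴴ, (trA (B * K * Bᴴ))ᴴ)
  rw [h, trB_conjTranspose, trA_conjTranspose]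

lemma trace_fst_partialTracesConj (B : Matrix (Fin m × Fin n) ι ℂ) (K : Matrix ι ι ℂ) :
    (partialTracesConj B K).1.trace = (partialTracesConj B K).2.trace := by
  simp [partialTracesConj, trace_trB, trace_trA]

lemma mul_mul_conjTranspose_mem_QCouplings [DecidableEq ι] {ρA : Matrix (Fin m) (Fin m) ℂ}
    {ρB : Matrix (Fin n) (Fin n) ℂ} {B : Matrix (Fin m × Fin n) ι ℂ}
    (hB : B * Bᴴ ∈ QCouplings ρA ρB) {K : Matrix ι ι ℂ} (hK : (1 + K).PosSemidef)
    (hBK : partialTracesConj B K = 0) : B * (1 + K) * Bᴴ ∈ QCouplings ρA ρB := by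
  obtain ⟨⟨-, htr⟩, hρA, hρB⟩ := hB
  have hB₀ : trB (B * K * Bᴴ) = 0 := congrArg Prod.fst hBK
  have hA₀ : trA (B * K * Bᴴ) = 0 := congrArg Prod.snd hBK
  have hsplit : B * (1 + K) * Bᴴ = B * Bᴴ + B * K * Bᴴ := by
    rw [Matrix.mul_add, Matrix.add_mul, Matrix.mul_one]
  refine ⟨⟨hK.mul_mul_conjTranspose_same B, ?_⟩, ?_, ?_⟩
  · rw [hsplit, trace_add, htr, ← trace_trB (B * K * Bᴴ), hB₀, trace_zero, add_zero]
  · rw [hsplit, trB_add, hρA, hB₀, add_zero]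
  · rw [hsplit, trA_add, hρB, hA₀, add_zero]

end PartialTrace

theorem extreme_point_rank_bound_general (m n : ℕ)
    (ρA : Matrix (Fin m) (Fin m) ℂ) (ρB : Matrix (Fin n) (Fin n) ℂ)
    (R : Matrix (Fin m × Fin n) (Fin m × Fin n) ℂ)
    (hR : R ∈ QCouplings ρA ρB)
    (hext : ∀ R₁ R₂, R₁ ∈ QCouplings ρA ρB → R₂ ∈ QCouplings ρA ρB →
      ∀ a : ℝ, 0 < a → a < 1 → R = a • R₁ + (1 - a) • R₂ → R₁ = R ∧ R₂ = R) :
    R.rank ^ 2 ≤ m ^ 2 + n ^ 2 - 1 := by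
  obtain ⟨B, C, hCB, hRB⟩ := hR.1.1.exists_eq_mul_conjTranspose_of_mul_eq_one
  by_contra! hrank
  have hm : Nonempty (Fin m) := by
    by_contra hm
    rw [not_nonempty_iff] at hm
    simpa [trace] using hR.1.2
  obtain ⟨K₀, hK₀, hΦK₀⟩ :=
    (partialTracesConj B).exists_ne_zero_map_eq_zero_of_trace_fst_eq_trace_snd
      (trace_fst_partialTracesConj B) (by simpa [Module.finrank_matrix, sq] using hrank)
  obtain ⟨K, hKsa, hK, hΦK⟩ := (partialTracesConj B).exists_isSelfAdjoint_ne_zero_map_eq_zero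
    (partialTracesConj_star B) hK₀ hΦK₀
  obtain ⟨c, hc, hplus, hminus⟩ := IsHermitian.exists_posSemidef_one_add_smul hKsa
  have hR₁ := mul_mul_conjTranspose_mem_QCouplings (hRB ▸ hR) hplus
    (by rw [map_smul, hΦK, smul_zero])
  have hR₂ := mul_mul_conjTranspose_mem_QCouplings (hRB ▸ hR) (by rwa [← sub_eq_add_neg])
    (by rw [map_neg, map_smul, hΦK, smul_zero, neg_zero])
  have hmid : R = (1 / 2 : ℝ) • (B * (1 + (c : ℂ) • K) * Bᴴ) +
      (1 - 1 / 2 : ℝ) • (B * (1 + -((c : ℂ) • K)) * Bᴴ) := by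
    simp only [hRB, Matrix.mul_add, Matrix.add_mul, Matrix.mul_one, Matrix.mul_neg,
      Matrix.neg_mul]
    module
  have hfixed := (hext _ _ hR₁ hR₂ (1 / 2) (by norm_num) (by norm_num) hmid).1
  have hcK : 1 + (c : ℂ) • K = 1 := mul_mul_conjTranspose_injective_of_mul_eq_one hCB
    (by simpa only [Matrix.mul_one] using hfixed.trans hRB)
  simp [hc.ne', hK] at hcK

/-- an extreme point of the coupling set has rank at most
`√(m² + n² − 1)`. -/
theorem extreme_point_rank_bound (m n : ℕ)
    (ρA : Matrix (Fin m) (Fin m) ℂ) (ρB : Matrix (Fin n) (Fin n) ℂ)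
    (hA : IsDensityMatrix ρA) (hB : IsDensityMatrix ρB)
    (R : Matrix (Fin m × Fin n) (Fin m × Fin n) ℂ)
    (hR : R ∈ QCouplings ρA ρB)
    (hext : ∀ R₁ R₂, R₁ ∈ QCouplings ρA ρB → R₂ ∈ QCouplings ρA ρB →
      ∀ a : ℝ, 0 < a → a < 1 → R = a • R₁ + (1 - a) • R₂ → R₁ = R ∧ R₂ = R) :
    R.rank ^ 2 ≤ m ^ 2 + n ^ 2 - 1 :=
  extreme_point_rank_bound_general m n ρA ρB R hR hext
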